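/- Let X and Y be real Banach spaces, F : X ⇒ Y and G₁,…,Gₙ : Y ⇒ X be multifunctions such that Gr F and each Gr Gᵢ are locally closed. Suppose Dom(F − G₁⁻¹ − … − Gₙ⁻¹) is nonempty and let L > 0 and M₁,…,Mₙ > 0 satisfy L > M₁⁻¹ + … + Mₙ⁻¹. Let (x,y) ∈ Gr F and (zᵢ,x) ∈ Gr Gᵢ for every i. If F is L-open at every point of its graph lying in some neighborhood of (x,y), and each Gᵢ is Mᵢ-open at every point of its graph lying in some neighborhood of (zᵢ,x), then F − G₁⁻¹ − … − Gₙ⁻¹ is (L − M₁⁻¹ − … − Mₙ⁻¹)-open at (x, y − z₁ − … − zₙ). -/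

import Mathlib

open Metric Set Filter Topology

/-- `F` is `L`-open at `(xb, yb)`. -/
def IsOpenAtPt {X Y : Type*} [NormedAddCommGroup X] [NormedAddCommGroup Y]
    (F : X → Set Y) (xb : X) (yb : Y) (L : ℝ) : Prop :=
  ∃ ε > (0 : ℝ), ∀ ρ ∈ Set.Ioo (0 : ℝ) ε, ball yb (ρ * L) ⊆ ⋃ x ∈ ball xb ρ, F x

/-- A set is locally closed if every of its points has a neighborhood `W` such that
`S ∩ cl W` is closed. -/
def LocallyClosedSet {α : Type*} [TopologicalSpace α] (S : Set α) : Prop :=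
  ∀ a ∈ S, ∃ W ∈ 𝓝 a, IsClosed (S ∩ closure W)

/-- The multifunction `F - G₁⁻¹ - ⋯ - Gₙ⁻¹ : X ⇒ Y`, given by
`x ↦ {y - z₁ - ⋯ - zₙ : y ∈ F(x), zᵢ ∈ Gᵢ⁻¹(x)}`. -/
def mdiffN {X Y : Type*} [AddCommGroup Y] (F : X → Set Y) {n : ℕ}
    (G : Fin n → Y → Set X) : X → Set Y :=
  fun x => {w | ∃ y ∈ F x, ∃ z : Fin n → Y, (∀ i, x ∈ G i (z i)) ∧ w = y - ∑ i, z i}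

/-!
Ekeland's variational principle, applied to the residual `‖w - (y - ∑ zᵢ)‖` on the joint graph
`{(x, y, z) | y ∈ F x, x ∈ Gᵢ zᵢ}`, measured in the metric `max (‖Δx‖, ‖Δy‖ / L, maxᵢ Mᵢ ‖Δzᵢ‖)`;
local closedness of the graphs makes the joint graph closed near `(x̄, ȳ, z̄)`, so the principle
applies there. At a point whose residual is not zero, openness of `F` moves `y` towards `w` by
almost `Lρ` with `‖Δx‖ < ρ`, and openness of the `Gᵢ` lets each `zᵢ` follow the new `x` with
`‖Δzᵢ‖ < ρ / Mᵢ`: a step of length at most `ρ` in that metric that lowers the residual by almost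
`(L - ∑ Mᵢ⁻¹) ρ`. Hence an Ekeland point for a slope `c < L - ∑ Mᵢ⁻¹` has residual zero, and it lies
within `‖w - (ȳ - ∑ z̄ᵢ)‖ / c < ρ` of the starting point.
-/

section Ekeland

variable {α : Type*} [PseudoMetricSpace α] {f : α → ℝ} {c : ℝ}

def ekelandSet (f : α → ℝ) (c : ℝ) (a : α) : Set α :=
  {b | f b + c * dist b a ≤ f a}

lemma mem_ekelandSet {a b : α} : b ∈ ekelandSet f c a ↔ f b + c * dist b a ≤ f a := Iff.rfl

lemma self_mem_ekelandSet (a : α) : a ∈ ekelandSet f c a := by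
  simp [mem_ekelandSet]

lemma ekelandSet_subset (hc : 0 ≤ c) {a b : α} (hb : b ∈ ekelandSet f c a) :
    ekelandSet f c b ⊆ ekelandSet f c a := fun d hd => by
  have := mul_le_mul_of_nonneg_left (dist_triangle d b a) hc
  simp only [mem_ekelandSet] at *
  linarith

lemma LowerSemicontinuous.isClosed_ekelandSet (hf : LowerSemicontinuous f) (a : α) :
    IsClosed (ekelandSet f c a) :=
  (hf.add (continuous_const.mul (continuous_id.dist continuous_const)).lowerSemicontinuous
    ).isClosed_preimage (f a)

/-- Ekeland's variational principle. -/
theorem LowerSemicontinuous.exists_forall_le_add_mul_dist [CompleteSpace α]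
    (hf : LowerSemicontinuous f) (hbdd : BddBelow (range f)) (hc : 0 < c) (a₀ : α) :
    ∃ b, f b + c * dist b a₀ ≤ f a₀ ∧ ∀ a, f b ≤ f a + c * dist a b := by
  have hnext : ∀ (k : ℕ) (a : α), ∃ b ∈ ekelandSet f c a,
      f b < sInf (f '' ekelandSet f c a) + (1 / 2) ^ k := fun k a => by
    simpa using Real.lt_sInf_add_pos ⟨f a, mem_image_of_mem f (self_mem_ekelandSet a)⟩
      (by positivity : (0 : ℝ) < (1 / 2) ^ k)
  choose g hg_mem hg_lt using hnext
  let u : ℕ → α := fun k => Nat.rec (motive := fun _ => α) a₀ g k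
  have hu_anti : Antitone fun k => ekelandSet f c (u k) :=
    antitone_nat_of_succ_le fun k => ekelandSet_subset hc.le (hg_mem k (u k))
  have hinf_le : ∀ k, ∀ a ∈ ekelandSet f c (u k), f (u (k + 1)) ≤ f a + (1 / 2) ^ k :=
    fun k a ha => by
      have := csInf_le (hbdd.mono (image_subset_range _ _)) (mem_image_of_mem f ha)
      linarith [hg_lt k (u k)]
  have hsmall : ∀ k, ∀ a ∈ ekelandSet f c (u (k + 1)), c * dist a (u (k + 1)) ≤ (1 / 2) ^ k :=
    fun k a ha => by
      have := hinf_le k a (hu_anti k.le_succ ha)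
      simp only [mem_ekelandSet] at ha
      linarith
  have hcauchy : CauchySeq u := by
    refine Metric.cauchySeq_iff'.2 fun ε hε => ?_
    obtain ⟨k, hk⟩ := exists_pow_lt_of_lt_one (mul_pos hε hc) (by norm_num : (1 / 2 : ℝ) < 1)
    refine ⟨k + 1, fun m hm => ?_⟩
    have := hsmall k (u m) (hu_anti hm (self_mem_ekelandSet _))
    rw [← mul_lt_mul_iff_of_pos_left hc]
    linarith [mul_comm ε c]
  obtain ⟨b, hb⟩ := cauchySeq_tendsto_of_complete hcauchy
  have hb_mem : ∀ k, b ∈ ekelandSet f c (u k) := fun k =>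
    (hf.isClosed_ekelandSet _).mem_of_tendsto hb
      (eventually_atTop.2 ⟨k, fun j hj => hu_anti hj (self_mem_ekelandSet _)⟩)
  refine ⟨b, hb_mem 0, fun a => ?_⟩
  by_contra! hlt
  have ha_mem : ∀ k, a ∈ ekelandSet f c (u k) := fun k => by
    have h₁ := mul_le_mul_of_nonneg_left (dist_triangle a b (u k)) hc.le
    have h₂ := hb_mem k
    simp only [mem_ekelandSet] at h₂ ⊢
    linarith
  obtain ⟨k, hk⟩ := exists_pow_lt_of_lt_one (sub_pos.2 hlt) (by norm_num : (1 / 2 : ℝ) < 1)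
  have h₁ := hb_mem (k + 1)
  have h₂ := hinf_le k a (ha_mem k)
  simp only [mem_ekelandSet] at h₁
  nlinarith [dist_nonneg (x := a) (y := b), dist_nonneg (x := b) (y := u (k + 1))]

theorem exists_dist_lt_eq_zero_of_forall_descent [CompleteSpace α] {C : Set α} {φ : α → ℝ}
    {a₀ : α} {R : ℝ} (hC : IsClosed (C ∩ closedBall a₀ R)) (hφ : LowerSemicontinuous φ)
    (hφ0 : ∀ a, 0 ≤ φ a) (ha₀ : a₀ ∈ C) (hc : 0 < c) (hR : φ a₀ < c * R)
    (hdescent : ∀ a ∈ C, dist a a₀ < R → 0 < φ a →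
      ∀ δ > 0, ∃ b ∈ C, dist b a < δ ∧ φ b + c * dist b a < φ a) :
    ∃ a ∈ C, dist a a₀ < R ∧ φ a = 0 := by
  obtain ⟨r, hr₀, hrR⟩ := exists_between ((div_lt_iff₀' hc).2 hR)
  have hr : 0 ≤ r := (div_nonneg (hφ0 a₀) hc.le).trans hr₀.le
  set K := C ∩ closedBall a₀ R ∩ closedBall a₀ r
  have : CompleteSpace K := (hC.inter isClosed_closedBall).completeSpace_coe
  have ha₀K : a₀ ∈ K :=
    ⟨⟨ha₀, mem_closedBall_self (hr.trans hrR.le)⟩, mem_closedBall_self hr⟩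
  obtain ⟨⟨b, hbK⟩, hb₀, hbmin⟩ := (hφ.comp continuous_subtype_val).exists_forall_le_add_mul_dist
    ⟨0, by rintro _ ⟨a, rfl⟩; exact hφ0 a⟩ hc ⟨a₀, ha₀K⟩
  simp only [Function.comp_apply, Subtype.dist_eq, Subtype.forall] at hb₀ hbmin
  have hb : dist b a₀ < r := by
    rw [div_lt_iff₀' hc] at hr₀
    exact lt_of_mul_lt_mul_left (by linarith [hφ0 b]) hc.le
  refine ⟨b, hbK.1.1, hb.trans hrR, ?_⟩
  by_contra hne
  obtain ⟨b', hb'C, hb'b, hb'φ⟩ :=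
    hdescent b hbK.1.1 (hb.trans hrR) ((hφ0 b).lt_of_ne' hne) (r - dist b a₀) (by linarith)
  have hb'r : dist b' a₀ ≤ r := by linarith [dist_triangle b' b a₀]
  linarith [hbmin b' ⟨⟨hb'C, hb'r.trans hrR.le⟩, hb'r⟩]

end Ekeland

lemma isOpenAtPt_iff_eventually {X Y : Type*} [NormedAddCommGroup X] [NormedAddCommGroup Y]
    {F : X → Set Y} {x : X} {y : Y} {L : ℝ} :
    IsOpenAtPt F x y L ↔ ∀ᶠ ρ in 𝓝[>] (0 : ℝ), ball y (ρ * L) ⊆ ⋃ x' ∈ ball x ρ, F x' := by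
  rw [(nhdsGT_basis (0 : ℝ)).eventually_iff]
  rfl

lemma LocallyClosedSet.isLocallyClosed {α : Type*} [TopologicalSpace α] {S : Set α}
    (hS : LocallyClosedSet S) : IsLocallyClosed S := by
  refine ((isLocallyClosed_tfae S).out 0 2).2 fun a ha => ?_
  obtain ⟨W, hW, hcl⟩ := hS a ha
  refine ⟨closure W, mem_of_superset hW subset_closure, isClosed_preimage_val.2 ?_⟩
  rw [inter_comm (closure W) S, hcl.closure_eq]
  exact fun p hp => hp.2.1

lemma IsLocallyClosed.iInter {α ι : Type*} [TopologicalSpace α] [Finite ι] {s : ι → Set α}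
    (hs : ∀ i, IsLocallyClosed (s i)) : IsLocallyClosed (⋂ i, s i) := by
  choose U Z hU hZ hUZ using hs
  refine ⟨⋂ i, U i, ⋂ i, Z i, isOpen_iInter_of_finite hU, isClosed_iInter hZ, ?_⟩
  simp_rw [hUZ, iInter_inter_distrib]

lemma IsLocallyClosed.eventually_isClosed_inter_closedBall {α : Type*} [PseudoMetricSpace α]
    {C : Set α} (hC : IsLocallyClosed C) {a : α} (ha : a ∈ C) :
    ∀ᶠ r in 𝓝 (0 : ℝ), IsClosed (C ∩ closedBall a r) := by
  obtain ⟨U, Z, hU, hZ, rfl⟩ := hC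
  filter_upwards [eventually_closedBall_subset (hU.mem_nhds ha.1)] with r hr
  rw [inter_right_comm, inter_eq_right.2 hr]
  exact isClosed_closedBall.inter hZ

section JointGraph

variable {X Y : Type*} {n : ℕ}

def jointGraph (F : X → Set Y) (G : Fin n → Y → Set X) : Set (X × Y × (Fin n → Y)) :=
  {p | p.2.1 ∈ F p.1 ∧ ∀ i, p.1 ∈ G i (p.2.2 i)}

lemma isLocallyClosed_jointGraph [TopologicalSpace X] [TopologicalSpace Y] {F : X → Set Y}
    {G : Fin n → Y → Set X} (hF : IsLocallyClosed {p : X × Y | p.2 ∈ F p.1})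
    (hG : ∀ i, IsLocallyClosed {p : Y × X | p.2 ∈ G i p.1}) :
    IsLocallyClosed (jointGraph F G) := by
  have hF' := hF.preimage (f := fun p : X × Y × (Fin n → Y) => (p.1, p.2.1)) (by fun_prop)
  have hG' := IsLocallyClosed.iInter fun i =>
    (hG i).preimage (f := fun p : X × Y × (Fin n → Y) => (p.2.2 i, p.1)) (by fun_prop)
  convert hF'.inter hG' using 1
  ext p
  simp [jointGraph]

def mdiffValue [AddCommGroup Y] (p : X × Y × (Fin n → Y)) : Y :=
  p.2.1 - ∑ i, p.2.2 i

lemma mdiffValue_mem_mdiffN [AddCommGroup Y] {F : X → Set Y} {G : Fin n → Y → Set X}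
    {p : X × Y × (Fin n → Y)} (hp : p ∈ jointGraph F G) : mdiffValue p ∈ mdiffN F G p.1 :=
  ⟨p.2.1, hp.1, p.2.2, hp.2, rfl⟩

end JointGraph

section Weighted

variable {X Y : Type*} [NormedAddCommGroup Y] [NormedSpace ℝ Y] {n : ℕ}
  (L : ℝ) (M : Fin n → ℝ)

/-- In these coordinates the sup distance is `max ‖Δx‖ (‖Δy‖ / L) (maxᵢ Mᵢ ‖Δzᵢ‖)`. -/
noncomputable def weigh (p : X × Y × (Fin n → Y)) : X × Y × (Fin n → Y) :=
  (p.1, L⁻¹ • p.2.1, fun i => M i • p.2.2 i)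

noncomputable def unweigh (σ : X × Y × (Fin n → Y)) : X × Y × (Fin n → Y) :=
  (σ.1, L • σ.2.1, fun i => (M i)⁻¹ • σ.2.2 i)

variable {L M}

lemma unweigh_weigh (hL : L ≠ 0) (hM : ∀ i, M i ≠ 0) (p : X × Y × (Fin n → Y)) :
    unweigh L M (weigh L M p) = p := by
  simp [weigh, unweigh, smul_smul, hL, hM]

lemma weigh_unweigh (hL : L ≠ 0) (hM : ∀ i, M i ≠ 0) (σ : X × Y × (Fin n → Y)) :
    weigh L M (unweigh L M σ) = σ := by
  simp [weigh, unweigh, smul_smul, hL, hM]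

lemma continuous_unweigh [TopologicalSpace X] : Continuous (unweigh (X := X) (Y := Y) L M) := by
  unfold unweigh
  fun_prop

lemma dist_weigh_le [PseudoMetricSpace X] (hL : 0 < L) (hM : ∀ i, 0 < M i)
    {p q : X × Y × (Fin n → Y)} {r : ℝ} (hr : 0 ≤ r) (h₁ : dist p.1 q.1 ≤ r) (h₂ : dist p.2.1 q.2.1 ≤ L * r)
    (h₃ : ∀ i, M i * dist (p.2.2 i) (q.2.2 i) ≤ r) : dist (weigh L M p) (weigh L M q) ≤ r := by
  refine max_le h₁ (max_le ?_ ((dist_pi_le_iff hr).2 fun i => ?_)) <;> simp only [weigh]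
  · rw [dist_smul₀, Real.norm_eq_abs, abs_inv, abs_of_pos hL, inv_mul_le_iff₀ hL]
    exact h₂
  · rw [dist_smul₀, Real.norm_eq_abs, abs_of_pos (hM i)]
    exact h₃ i

end Weighted

lemma exists_mem_jointGraph_dist_mdiffValue_le {X Y : Type*} [NormedAddCommGroup X]
    [NormedAddCommGroup Y] [NormedSpace ℝ Y] {n : ℕ} {F : X → Set Y} {G : Fin n → Y → Set X}
    {L : ℝ} {M : Fin n → ℝ} (hM : ∀ i, 0 < M i) {p : X × Y × (Fin n → Y)}
    (hF : IsOpenAtPt F p.1 p.2.1 L) (hG : ∀ i, IsOpenAtPt (G i) (p.2.2 i) p.1 (M i)) {w : Y}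
    (hw : w ≠ mdiffValue p) {t δ : ℝ} (ht : 0 < t) (htL : t < L) (hδ : 0 < δ) :
    ∃ ρ ∈ Ioo 0 δ, ∃ q ∈ jointGraph F G, dist (weigh L M q) (weigh L M p) ≤ ρ ∧
      dist w (mdiffValue q) ≤ dist w (mdiffValue p) - (t - ∑ i, (M i)⁻¹) * ρ := by
  set v := mdiffValue p
  have he : 0 < dist w v := dist_pos.2 hw
  have hG' : ∀ i, ∀ᶠ ρ in 𝓝[>] (0 : ℝ),
      ball p.1 (ρ / M i * M i) ⊆ ⋃ z' ∈ ball (p.2.2 i) (ρ / M i), G i z' := fun i => by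
    obtain ⟨ε, hε, hGε⟩ := hG i
    filter_upwards [Ioo_mem_nhdsGT (mul_pos (hM i) hε)] with ρ hρ
    exact hGε _ ⟨div_pos hρ.1 (hM i), (div_lt_iff₀' (hM i)).2 hρ.2⟩
  obtain ⟨ρ, ⟨hρ, hρδ⟩, hρe, hFρ, hGρ⟩ :=
    (Eventually.and (Ioo_mem_nhdsGT hδ : ∀ᶠ ρ in 𝓝[>] (0 : ℝ), ρ ∈ Ioo 0 δ)
      (((eventually_lt_nhds (div_pos he ht)).filter_mono nhdsWithin_le_nhds).and
        ((isOpenAtPt_iff_eventually.1 hF).and (eventually_all.2 hG')))).exists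
  rw [lt_div_iff₀' ht] at hρe
  set s := t * ρ / dist w v
  set y' := p.2.1 + s • (w - v)
  have hy' : dist y' p.2.1 = t * ρ := by
    rw [dist_eq_norm, add_sub_cancel_left, norm_smul, ← dist_eq_norm, Real.norm_eq_abs,
      abs_of_pos (by positivity), div_mul_cancel₀ _ he.ne']
  obtain ⟨x', hx', hy'F⟩ : ∃ x' ∈ ball p.1 ρ, y' ∈ F x' := by
    simpa using hFρ (mem_ball.2 (hy'.trans_lt (by nlinarith)))
  have hz : ∀ i, ∃ z' ∈ ball (p.2.2 i) (ρ / M i), x' ∈ G i z' := fun i => by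
    simpa using hGρ i (by rwa [div_mul_cancel₀ _ (hM i).ne'])
  choose z' hz' hGz' using hz
  refine ⟨ρ, ⟨hρ, hρδ⟩, (x', y', z'), ⟨hy'F, hGz'⟩, ?_, ?_⟩
  · refine dist_weigh_le (ht.trans htL) hM hρ.le (mem_ball.1 hx').le
      (hy'.trans_le (by nlinarith)) fun i => ?_
    exact ((lt_div_iff₀' (hM i)).1 (mem_ball.1 (hz' i))).le
  · have hs : s ≤ 1 := (div_le_one he).2 hρe.le
    calc dist w (y' - ∑ i, z' i)
        = ‖(1 - s) • (w - v) + ∑ i, (z' i - p.2.2 i)‖ := by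
          rw [dist_eq_norm, sub_smul, one_smul, Finset.sum_sub_distrib]
          simp only [y', v, mdiffValue]
          abel_nf
      _ ≤ (1 - s) * dist w v + ∑ i, ρ / M i := by
          refine norm_add_le_of_le ?_ (norm_sum_le_of_le _ fun i _ => ?_)
          · rw [norm_smul, Real.norm_eq_abs, abs_of_nonneg (sub_nonneg.2 hs), dist_eq_norm]
          · rw [← dist_eq_norm]
            exact (mem_ball.1 (hz' i)).le
      _ = dist w v - (t - ∑ i, (M i)⁻¹) * ρ := by
          simp only [s, div_eq_mul_inv, sub_mul, Finset.sum_mul, one_mul]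
          field_simp
          ring

lemma exists_unweigh_mem_jointGraph_descent {X Y : Type*} [NormedAddCommGroup X]
    [NormedAddCommGroup Y] [NormedSpace ℝ Y] {n : ℕ} {F : X → Set Y} {G : Fin n → Y → Set X}
    {L : ℝ} {M : Fin n → ℝ} (hM : ∀ i, 0 < M i) {σ : X × Y × (Fin n → Y)}
    (hF : IsOpenAtPt F (unweigh L M σ).1 (unweigh L M σ).2.1 L)
    (hG : ∀ i, IsOpenAtPt (G i) ((unweigh L M σ).2.2 i) (unweigh L M σ).1 (M i)) {w : Y}
    (hw : w ≠ mdiffValue (unweigh L M σ)) {c : ℝ} (hc : 0 ≤ c) (hcL : c + ∑ i, (M i)⁻¹ < L)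
    {δ : ℝ} (hδ : 0 < δ) :
    ∃ σ' ∈ unweigh L M ⁻¹' jointGraph F G, dist σ' σ < δ ∧
      dist w (mdiffValue (unweigh L M σ')) + c * dist σ' σ <
        dist w (mdiffValue (unweigh L M σ)) := by
  have hS : 0 ≤ ∑ i, (M i)⁻¹ := Finset.sum_nonneg fun i _ => (inv_pos.2 (hM i)).le
  obtain ⟨t, ht, htL⟩ := exists_between hcL
  have hL : L ≠ 0 := (show 0 < L by linarith).ne'
  have hM₀ : ∀ i, M i ≠ 0 := fun i => (hM i).ne'
  obtain ⟨ρ, ⟨hρ, hρδ⟩, q, hq, hqσ, hqw⟩ :=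
    exists_mem_jointGraph_dist_mdiffValue_le hM hF hG hw (by linarith) htL hδ
  rw [weigh_unweigh hL hM₀] at hqσ
  refine ⟨weigh L M q, by simpa [unweigh_weigh hL hM₀] using hq, hqσ.trans_lt hρδ, ?_⟩
  rw [unweigh_weigh hL hM₀]
  nlinarith [mul_le_mul_of_nonneg_left hqσ hc]

lemma eventually_isOpenAtPt_of_mem_jointGraph {X Y : Type*} [NormedAddCommGroup X]
    [NormedAddCommGroup Y] {n : ℕ} {F : X → Set Y} {G : Fin n → Y → Set X} {L : ℝ}
    {M : Fin n → ℝ} {x : X} {y : Y} {z : Fin n → Y}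
    (hF : ∃ N ∈ 𝓝 (x, y), ∀ p ∈ {q : X × Y | q.2 ∈ F q.1} ∩ N, IsOpenAtPt F p.1 p.2 L)
    (hG : ∀ i, ∃ N ∈ 𝓝 (z i, x), ∀ p ∈ {q : Y × X | q.2 ∈ G i q.1} ∩ N,
      IsOpenAtPt (G i) p.1 p.2 (M i)) :
    ∀ᶠ p in 𝓝 (x, y, z), p ∈ jointGraph F G →
      IsOpenAtPt F p.1 p.2.1 L ∧ ∀ i, IsOpenAtPt (G i) (p.2.2 i) p.1 (M i) := by
  obtain ⟨N, hN, hNF⟩ := hF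
  choose N' hN' hNG using hG
  have hF' : ∀ᶠ p : X × Y × (Fin n → Y) in 𝓝 (x, y, z), (p.1, p.2.1) ∈ N :=
    (show Continuous fun p : X × Y × (Fin n → Y) => (p.1, p.2.1) by fun_prop).continuousAt
      |>.preimage_mem_nhds hN
  have hG' : ∀ i, ∀ᶠ p : X × Y × (Fin n → Y) in 𝓝 (x, y, z), (p.2.2 i, p.1) ∈ N' i := fun i =>
    (show Continuous fun p : X × Y × (Fin n → Y) => (p.2.2 i, p.1) by fun_prop).continuousAt
      |>.preimage_mem_nhds (hN' i)
  filter_upwards [hF', eventually_all.2 hG'] with p hpF hpG hp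
  exact ⟨hNF _ ⟨hp.1, hpF⟩, fun i => hNG i _ ⟨hp.2 i, hpG i⟩⟩

theorem stmt2_general {X Y : Type*} [NormedAddCommGroup X] [NormedSpace ℝ X] [CompleteSpace X]
    [NormedAddCommGroup Y] [NormedSpace ℝ Y] [CompleteSpace Y]
    (F : X → Set Y) {n : ℕ} (G : Fin n → Y → Set X)
    (hFcl : LocallyClosedSet {p : X × Y | p.2 ∈ F p.1})
    (hGcl : ∀ i, LocallyClosedSet {p : Y × X | p.2 ∈ G i p.1})
    (L : ℝ) (M : Fin n → ℝ) (hM : ∀ i, 0 < M i)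
    (hsum : ∑ i, (M i)⁻¹ < L)
    (x : X) (y : Y) (z : Fin n → Y) (hxy : y ∈ F x) (hz : ∀ i, x ∈ G i (z i))
    (hFopen : ∃ N ∈ 𝓝 (x, y), ∀ p ∈ {q : X × Y | q.2 ∈ F q.1} ∩ N,
      IsOpenAtPt F p.1 p.2 L)
    (hGopen : ∀ i, ∃ N ∈ 𝓝 (z i, x), ∀ p ∈ {q : Y × X | q.2 ∈ G i q.1} ∩ N,
      IsOpenAtPt (G i) p.1 p.2 (M i)) :
    IsOpenAtPt (mdiffN F G) x (y - ∑ i, z i) (L - ∑ i, (M i)⁻¹) := by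
  have hL : L ≠ 0 :=
    ((Finset.sum_nonneg fun i _ => (inv_pos.2 (hM i)).le).trans_lt hsum).ne'
  set C := unweigh L M ⁻¹' jointGraph F G
  set σ₀ := weigh L M (x, y, z)
  have hσ₀ : unweigh L M σ₀ = (x, y, z) := unweigh_weigh hL (fun i => (hM i).ne') _
  have hσ₀C : σ₀ ∈ C := by simpa [C, hσ₀] using ⟨hxy, hz⟩
  have hC : IsLocallyClosed C := (isLocallyClosed_jointGraph hFcl.isLocallyClosed
    fun i => (hGcl i).isLocallyClosed).preimage continuous_unweigh
  have hopen := (continuous_unweigh.tendsto' σ₀ _ hσ₀).eventually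
    (eventually_isOpenAtPt_of_mem_jointGraph hFopen hGopen)
  rw [isOpenAtPt_iff_eventually]
  filter_upwards [nhdsWithin_le_nhds ((hC.eventually_isClosed_inter_closedBall hσ₀C).and
    (eventually_closedBall_subset hopen)), self_mem_nhdsWithin]
    with ρ ⟨hCρ, hopenρ⟩ (hρ : 0 < ρ) w hw
  obtain ⟨c, hc, hcL⟩ := exists_between ((div_lt_iff₀' hρ).2 (mem_ball.1 hw))
  have hc₀ : 0 < c := (div_nonneg dist_nonneg hρ.le).trans_lt hc
  obtain ⟨σ, hσC, hσ, hσw⟩ := exists_dist_lt_eq_zero_of_forall_descent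
    (φ := fun σ => dist w (mdiffValue (unweigh L M σ))) hCρ
    (by unfold mdiffValue unweigh; fun_prop : Continuous _).lowerSemicontinuous
    (fun _ => dist_nonneg) hσ₀C hc₀ (by simpa [hσ₀, mdiffValue] using (div_lt_iff₀ hρ).1 hc)
    fun σ hσC hσ hφ _ hδ => by
      obtain ⟨hFσ, hGσ⟩ := hopenρ (mem_closedBall.2 hσ.le) hσC
      exact exists_unweigh_mem_jointGraph_descent hM hFσ hGσ (dist_pos.1 hφ) hc₀.le
        (lt_sub_iff_add_lt.1 hcL) hδ
  refine mem_biUnion (x := σ.1) ((le_max_left _ _).trans_lt hσ) ?_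
  rw [dist_eq_zero.1 hσw]
  exact mdiffValue_mem_mdiffN hσC

/-- openness stability for a difference with several multifunctions. -/
theorem stmt2 {X Y : Type*} [NormedAddCommGroup X] [NormedSpace ℝ X] [CompleteSpace X]
    [NormedAddCommGroup Y] [NormedSpace ℝ Y] [CompleteSpace Y]
    (F : X → Set Y) {n : ℕ} (G : Fin n → Y → Set X)
    (hFcl : LocallyClosedSet {p : X × Y | p.2 ∈ F p.1})
    (hGcl : ∀ i, LocallyClosedSet {p : Y × X | p.2 ∈ G i p.1})
    (hdom : ∃ x, (mdiffN F G x).Nonempty)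
    (L : ℝ) (M : Fin n → ℝ) (hL : 0 < L) (hM : ∀ i, 0 < M i)
    (hsum : ∑ i, (M i)⁻¹ < L)
    (x : X) (y : Y) (z : Fin n → Y) (hxy : y ∈ F x) (hz : ∀ i, x ∈ G i (z i))
    (hFopen : ∃ N ∈ 𝓝 (x, y), ∀ p ∈ {q : X × Y | q.2 ∈ F q.1} ∩ N,
      IsOpenAtPt F p.1 p.2 L)
    (hGopen : ∀ i, ∃ N ∈ 𝓝 (z i, x), ∀ p ∈ {q : Y × X | q.2 ∈ G i q.1} ∩ N,
      IsOpenAtPt (G i) p.1 p.2 (M i)) :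
    IsOpenAtPt (mdiffN F G) x (y - ∑ i, z i) (L - ∑ i, (M i)⁻¹) :=
  stmt2_general F G hFcl hGcl L M hM hsum x y z hxy hz hFopen hGopen
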